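/- Let G be a finite group with no maximal subgroup of order two. If the power graph 𝒢(G) is minimally edge-connected, then the order of G is a power of a prime. -/

import Mathlib

/-!
The identity is adjacent to every vertex of the power graph. In a minimally edge-connected graph
with such a universal vertex every edge has an endpoint of minimum degree `δ`: a minimum cut
through the edge separates a side `B` avoiding the universal vertex, and counting cut edges
bounds the degree of every vertex of `B` by the edge-connectivity `≤ δ`. Hence all non-identity
elements have degree `δ`. A generator `y` of a maximal cyclic subgroup has degree `orderOf y - 1`,
so every maximal cyclic subgroup has order `m = δ + 1` and every element order divides `m`.
If `m` had two prime factors, with `p` the least, the neighbours of `y ^ p` outside `⟨y ^ p⟩`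
would be generators of cyclic subgroups of order `m`, giving `φ m ∣ m - m / p`; this forces
`φ r ∣ r` for the part `r` of `m` prime to `p`; but `r > 2` is odd since `p` is least, so `φ r`
is even.
-/

open Subgroup

/-- The power graph of a group: distinct `u`, `v` are adjacent iff one is a
positive integer power of the other. -/
def powerGraph (G : Type*) [Group G] : SimpleGraph G where
  Adj u v := u ≠ v ∧ ((∃ n : ℕ, 0 < n ∧ v = u ^ n) ∨ (∃ m : ℕ, 0 < m ∧ u = v ^ m))
  symm := ⟨fun u v h => ⟨h.1.symm, h.2.symm⟩⟩
  loopless := ⟨fun u h => h.1 rfl⟩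

/-- The degree of a vertex in a graph. -/
noncomputable def gDegree {V : Type*} (Γ : SimpleGraph V) (x : V) : ℕ :=
  (Γ.neighborSet x).ncard

/-- The minimum degree δ(Γ) of a graph. -/
noncomputable def gMinDegree {V : Type*} (Γ : SimpleGraph V) : ℕ :=
  sInf (Set.range (gDegree Γ))

/-- The edge-connectivity κ'(Γ): the least size of a set of edges whose deletion
disconnects the graph. -/
noncomputable def edgeConn {V : Type*} (Γ : SimpleGraph V) : ℕ :=
  sInf {k | ∃ s : Finset (Sym2 V), s.card = k ∧ ↑s ⊆ Γ.edgeSet ∧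
    ¬ (Γ.deleteEdges ↑s).Connected}

/-- The vertex connectivity κ(Γ): the least size of a set of vertices whose deletion
disconnects the graph or leaves at most one vertex. -/
noncomputable def vertConn {V : Type*} (Γ : SimpleGraph V) : ℕ :=
  sInf {k | ∃ S : Set V, S.Finite ∧ S.ncard = k ∧
    (¬ (Γ.induce Sᶜ).Preconnected ∨ Sᶜ.Subsingleton)}

/-- A nontrivial connected graph is minimally edge-connected if deleting any edge
drops the edge-connectivity by exactly one. -/
def MinimallyEdgeConnected {V : Type*} (Γ : SimpleGraph V) : Prop :=
  Nontrivial V ∧ Γ.Connected ∧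
    ∀ e ∈ Γ.edgeSet, edgeConn (Γ.deleteEdges {e}) = edgeConn Γ - 1

/-- A nontrivial connected graph is minimally connected if deleting any edge
drops the vertex connectivity by exactly one. -/
def MinimallyConnected {V : Type*} (Γ : SimpleGraph V) : Prop :=
  Nontrivial V ∧ Γ.Connected ∧
    ∀ e ∈ Γ.edgeSet, vertConn (Γ.deleteEdges {e}) = vertConn Γ - 1

/-- `S` is a separating set of `Γ` if deleting the vertices of `S` leaves a
disconnected graph. -/
def IsSeparatingSet {V : Type*} (Γ : SimpleGraph V) (S : Set V) : Prop :=
  ¬ (Γ.induce Sᶜ).Preconnected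

/-- `S` is a minimum separating set of `Γ`. -/
def IsMinSeparatingSet {V : Type*} (Γ : SimpleGraph V) (S : Set V) : Prop :=
  IsSeparatingSet Γ S ∧ ∀ T : Set V, IsSeparatingSet Γ T → S.ncard ≤ T.ncard

/-- `y` generates a maximal cyclic subgroup of `G`: the cyclic subgroup `⟨y⟩` is
not properly contained in any cyclic subgroup. -/
def IsMaxCyclicGen {G : Type*} [Group G] (y : G) : Prop :=
  ∀ z : G, zpowers y ≤ zpowers z → zpowers y = zpowers z

/-- A subgroup is maximal cyclic if it is cyclic and not properly contained in
any cyclic subgroup. -/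
def IsMaximalCyclicSubgroup {G : Type*} [Group G] (H : Subgroup G) : Prop :=
  (∃ y : G, H = zpowers y) ∧ ∀ z : G, H ≤ zpowers z → H = zpowers z

section EdgeConnectivity

variable {V : Type*} {Γ : SimpleGraph V}

theorem gMinDegree_le_gDegree (x : V) : gMinDegree Γ ≤ gDegree Γ x :=
  Nat.sInf_le ⟨x, rfl⟩

theorem exists_gDegree_eq_gMinDegree [Nonempty V] : ∃ x, gDegree Γ x = gMinDegree Γ :=
  Nat.sInf_mem (Set.range_nonempty _)

theorem gDegree_le_card_sub_one [Finite V] (x : V) : gDegree Γ x ≤ Nat.card V - 1 := by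
  rw [← Set.ncard_singleton x, ← Set.ncard_compl]
  exact Set.ncard_le_ncard fun z hz => (Γ.ne_of_adj hz).symm

/-- Deleting the edges at `x` isolates `x`. -/
theorem exists_edgeCut_card_eq_gDegree [Finite V] [Nontrivial V] (Γ : SimpleGraph V) (x : V) :
    ∃ s : Finset (Sym2 V), s.card = gDegree Γ x ∧ ↑s ⊆ Γ.edgeSet ∧
      ¬ (Γ.deleteEdges ↑s).Connected := by
  classical
  have := Fintype.ofFinite V
  refine ⟨(Γ.neighborSet x).toFinset.image (s(x, ·)), ?_, ?_, fun hconn => ?_⟩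
  · rw [Finset.card_image_of_injective _ fun _ _ => Sym2.congr_right.mp, gDegree,
      Set.ncard_eq_toFinset_card']
  · simp only [Finset.coe_image, Set.coe_toFinset, Set.image_subset_iff]
    exact fun z hz => hz
  · obtain ⟨z, hz⟩ := hconn.preconnected.exists_adj_of_nontrivial x
    rw [SimpleGraph.deleteEdges_adj] at hz
    exact hz.2 (Finset.mem_image_of_mem _ (Set.mem_toFinset.mpr hz.1))

theorem edgeConn_le_gDegree [Finite V] [Nontrivial V] (x : V) : edgeConn Γ ≤ gDegree Γ x :=
  Nat.sInf_le (exists_edgeCut_card_eq_gDegree Γ x)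

theorem exists_edgeCut_card_eq_edgeConn [Finite V] [Nontrivial V] (Γ : SimpleGraph V) :
    ∃ s : Finset (Sym2 V), s.card = edgeConn Γ ∧ ↑s ⊆ Γ.edgeSet ∧
      ¬ (Γ.deleteEdges ↑s).Connected :=
  Nat.sInf_mem (s := {k | ∃ s : Finset (Sym2 V), s.card = k ∧ (s : Set (Sym2 V)) ⊆ Γ.edgeSet ∧
    ¬ (Γ.deleteEdges s).Connected}) ⟨_, exists_edgeCut_card_eq_gDegree Γ (Classical.arbitrary V)⟩

theorem SimpleGraph.Connected.one_le_edgeConn [Finite V] [Nontrivial V] (hΓ : Γ.Connected) :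
    1 ≤ edgeConn Γ := by
  obtain ⟨s, hs, -, hdisc⟩ := exists_edgeCut_card_eq_edgeConn Γ
  refine Nat.one_le_iff_ne_zero.mpr fun h0 => hdisc ?_
  rwa [Finset.card_eq_zero.mp (hs.trans h0), Finset.coe_empty, SimpleGraph.deleteEdges_empty]

theorem mem_of_adj_of_reachable_deleteEdges {F : Set (Sym2 V)} {c a b : V}
    (ha : (Γ.deleteEdges F).Reachable c a) (hb : ¬ (Γ.deleteEdges F).Reachable c b)
    (hab : Γ.Adj a b) : s(a, b) ∈ F :=
  by_contra fun h => hb (ha.trans (SimpleGraph.deleteEdges_adj.mpr ⟨hab, h⟩).reachable)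

variable {c : V}

/-- A neighbour `a ∈ B` of `b` is charged to the cut edge `s(c, a)`, a neighbour `a ∉ B` to the
cut edge `s(a, b)`. -/
theorem gDegree_le_card_of_forall_adj (hc : ∀ v, v ≠ c → Γ.Adj c v) {F : Finset (Sym2 V)}
    {B : Set V} (hcB : c ∉ B) (hF : ∀ a b, a ∉ B → b ∈ B → Γ.Adj a b → s(a, b) ∈ F)
    {b : V} (hb : b ∈ B) : gDegree Γ b ≤ F.card := by
  classical
  rw [gDegree, ← Set.ncard_coe_finset]
  refine Set.ncard_le_ncard_of_injOn (fun a => if a ∈ B then s(c, a) else s(a, b)) ?_ ?_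
    (Finset.finite_toSet F)
  · intro a ha
    by_cases haB : a ∈ B
    · simpa [haB] using hF c a hcB haB (hc a fun h => hcB (h ▸ haB))
    · simpa [haB] using hF a b haB hb ha.symm
  · intro a ha a' ha' h
    have hcb : c ≠ b := fun h => hcB (h ▸ hb)
    by_cases haB : a ∈ B <;> by_cases ha'B : a' ∈ B <;> simp only [haB, ha'B, if_true, if_false] at h
    · exact Sym2.congr_right.mp h
    · rcases Sym2.eq_iff.mp h with ⟨-, rfl⟩ | ⟨h', -⟩
      exacts [absurd ha Γ.irrefl, absurd h' hcb]
    · rcases Sym2.eq_iff.mp h with ⟨-, rfl⟩ | ⟨-, h'⟩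
      exacts [absurd ha' Γ.irrefl, absurd h'.symm hcb]
    · exact Sym2.congr_left.mp h

theorem MinimallyEdgeConnected.gDegree_eq_gMinDegree_or [Finite V] (h : MinimallyEdgeConnected Γ)
    (hc : ∀ v, v ≠ c → Γ.Adj c v) {u v : V} (huv : Γ.Adj u v) :
    gDegree Γ u = gMinDegree Γ ∨ gDegree Γ v = gMinDegree Γ := by
  classical
  obtain ⟨_, hconn, hmin⟩ := h
  have hcut : edgeConn Γ ≤ gMinDegree Γ := by
    obtain ⟨x, hx⟩ := exists_gDegree_eq_gMinDegree (Γ := Γ)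
    rw [← hx]
    exact edgeConn_le_gDegree x
  have hcut1 := hconn.one_le_edgeConn
  -- a minimum cut `s` of `Γ - uv` together with `uv` is a minimum cut `F` of `Γ`
  obtain ⟨s, hs, hsE, hdisc⟩ := exists_edgeCut_card_eq_edgeConn (Γ.deleteEdges {s(u, v)})
  rw [hmin _ huv] at hs
  have hus : s(u, v) ∉ s := fun h => by simpa using hsE h
  set F := insert s(u, v) s
  have hF : F.card = edgeConn Γ := by rw [Finset.card_insert_of_notMem hus]; omega
  rw [SimpleGraph.deleteEdges_deleteEdges, Set.singleton_union, ← Finset.coe_insert] at hdisc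
  set B := {y | ¬ (Γ.deleteEdges ↑F).Reachable c y}
  have hcB : c ∉ B := fun h => h (SimpleGraph.Reachable.refl c)
  have hcross a b (ha : a ∉ B) (hb : b ∈ B) (hab : Γ.Adj a b) : s(a, b) ∈ F :=
    mem_of_adj_of_reachable_deleteEdges (not_not.mp ha) hb hab
  have hdegB b (hb : b ∈ B) : gDegree Γ b = gMinDegree Γ :=
    le_antisymm ((gDegree_le_card_of_forall_adj hc hcB hcross hb).trans (hF ▸ hcut))
      (gMinDegree_le_gDegree b)
  by_cases huB : u ∈ B
  · exact Or.inl (hdegB u huB)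
  by_cases hvB : v ∈ B
  · exact Or.inr (hdegB v hvB)
  exfalso
  obtain ⟨b₀, hb₀⟩ : B.Nonempty := by
    by_contra hB
    refine hdisc (SimpleGraph.connected_iff_exists_forall_reachable _ |>.mpr ⟨c, fun y => ?_⟩)
    exact not_not.mp fun hy => hB ⟨y, hy⟩
  -- if `uv` does not cross the cut, `s` alone separates `B`
  have hcross' a b (ha : a ∉ B) (hb : b ∈ B) (hab : Γ.Adj a b) : s(a, b) ∈ s := by
    refine (Finset.mem_insert.mp (hcross a b ha hb hab)).resolve_left fun h => ?_
    rcases Sym2.eq_iff.mp h with ⟨-, rfl⟩ | ⟨-, rfl⟩ <;> contradiction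
  have := gDegree_le_card_of_forall_adj hc hcB hcross' hb₀
  have := gMinDegree_le_gDegree (Γ := Γ) b₀
  omega

end EdgeConnectivity

theorem Nat.not_totient_dvd_sub_div_minFac {m q : ℕ} (hm : m ≠ 0) (hq : q.Prime) (hqm : q ∣ m)
    (hqp : q ≠ m.minFac) : ¬ m.totient ∣ m - m / m.minFac := by
  set p := m.minFac
  have hp : p.Prime := Nat.minFac_prime (by rintro rfl; exact hq.ne_one (Nat.dvd_one.mp hqm))
  set r := ordCompl[p] m
  obtain ⟨k, hk⟩ : ∃ k, m.factorization p = k + 1 :=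
    Nat.exists_eq_add_one.mpr (hp.factorization_pos_of_dvd hm (Nat.minFac_dvd m))
  have hmr : m = p ^ (k + 1) * r := by rw [← hk]; exact (Nat.ordProj_mul_ordCompl_eq_self m p).symm
  have hpr : ¬ p ∣ r := Nat.not_dvd_ordCompl hp hm
  -- `p` is the least prime factor of `m`, so the `p`-free part `r` is odd
  have hr_odd : ¬ 2 ∣ r := by
    intro h2
    have hp2 : p = 2 := le_antisymm (Nat.minFac_le_of_dvd le_rfl (hmr ▸ h2.mul_left _)) hp.two_le
    exact hpr (hp2 ▸ h2)
  have hqr : q ∣ r :=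
    (((Nat.coprime_primes hq hp).mpr hqp).pow_right (k + 1)).dvd_of_dvd_mul_left (hmr ▸ hqm)
  have hr2 : 2 < r := by
    have := Nat.le_of_dvd (Nat.pos_of_ne_zero fun h => hm (by rw [hmr, h, mul_zero])) hqr
    have : q ≠ 2 := by rintro rfl; exact hr_odd hqr
    have := hq.two_le
    omega
  have htot : m.totient = (p ^ (k + 1)).totient * r.totient := by
    rw [hmr, Nat.totient_mul ((hp.coprime_iff_not_dvd.mpr hpr).pow_left _)]
  have hsub : m - m / p = (p ^ (k + 1)).totient * r := by
    rw [Nat.totient_prime_pow_succ hp, hmr, pow_succ', mul_assoc, Nat.mul_div_cancel_left _ hp.pos,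
      mul_comm _ (p - 1), mul_assoc, Nat.sub_one_mul]
  intro h
  rw [htot, hsub] at h
  have hr : r.totient ∣ r := (Nat.mul_dvd_mul_iff_left (Nat.totient_pos.mpr (pow_pos hp.pos _))).mp h
  exact hr_odd ((Nat.totient_even hr2).two_dvd.trans hr)

theorem Nat.eq_of_dvd_of_dvd_mul_prime {a b p : ℕ} (hp : p.Prime) (hab : a ∣ b) (hb : b ∣ a * p)
    (hne : b ≠ a) : b = a * p := by
  obtain ⟨e, rfl⟩ := hab
  have ha : a ≠ 0 := by rintro rfl; simp at hne
  rcases hp.eq_one_or_self_of_dvd e (Nat.dvd_of_mul_dvd_mul_left (Nat.pos_of_ne_zero ha) hb)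
    with rfl | rfl
  · simp at hne
  · rfl

section CyclicSubgroups

variable {G : Type*} [Group G] [Finite G]

theorem zpowers_eq_zpowers_of_le_of_orderOf_le {y z : G} (hle : zpowers y ≤ zpowers z)
    (hord : orderOf z ≤ orderOf y) : zpowers y = zpowers z :=
  eq_of_le_of_card_ge hle (by rwa [Nat.card_zpowers, Nat.card_zpowers])

theorem exists_isMaxCyclicGen_mem (x : G) : ∃ y : G, x ∈ zpowers y ∧ IsMaxCyclicGen y := by
  obtain ⟨y, hxy, hmax⟩ := Set.exists_max_image {y : G | x ∈ zpowers y} orderOf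
    (Set.toFinite _) ⟨x, mem_zpowers x⟩
  exact ⟨y, hxy, fun z hyz => zpowers_eq_zpowers_of_le_of_orderOf_le hyz (hmax z (hyz hxy))⟩

theorem ncard_setOf_zpowers_eq (z₀ : G) :
    {z : G | zpowers z = zpowers z₀}.ncard = (orderOf z₀).totient := by
  classical
  have := Fintype.ofFinite G
  have : {z : G | zpowers z = zpowers z₀} =
      Subtype.val '' {a : zpowers z₀ | orderOf a = orderOf z₀} := by
    ext z
    constructor
    · intro hz
      refine ⟨⟨z, hz ▸ mem_zpowers z⟩, ?_, rfl⟩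
      rw [Set.mem_ofPred_eq, orderOf_mk, ← Nat.card_zpowers, ← Nat.card_zpowers, hz]
    · rintro ⟨a, ha, rfl⟩
      exact zpowers_eq_zpowers_of_le_of_orderOf_le (zpowers_le.mpr a.2) (by rw [orderOf_coe, ha])
  rw [this, Set.ncard_image_of_injective _ Subtype.val_injective, Set.ncard_eq_toFinset_card',
    Set.toFinset_ofPred, IsCyclic.card_orderOf_eq_totient (by rw [Fintype.card_zpowers])]

theorem totient_dvd_ncard {S : Set G} {m : ℕ}
    (hS : ∀ z ∈ S, ∀ z', zpowers z' = zpowers z → z' ∈ S) (hord : ∀ z ∈ S, orderOf z = m) :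
    m.totient ∣ S.ncard := by
  classical
  have := Fintype.ofFinite G
  rw [Set.ncard_eq_toFinset_card', Finset.card_eq_sum_card_image zpowers]
  refine Finset.dvd_sum fun H hH => ?_
  obtain ⟨z₀, hz₀, rfl⟩ := Finset.mem_image.mp hH
  rw [Set.mem_toFinset] at hz₀
  have : {z ∈ S.toFinset | zpowers z = zpowers z₀} = {z : G | zpowers z = zpowers z₀}.toFinset := by
    ext z
    simp only [Finset.mem_filter, Set.mem_toFinset, Set.mem_ofPred_eq]
    exact ⟨And.right, fun hz => ⟨hS z₀ hz₀ z hz, hz⟩⟩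
  rw [this, ← Set.ncard_eq_toFinset_card', ncard_setOf_zpowers_eq, hord z₀ hz₀]

end CyclicSubgroups

section PowerGraph

variable {G : Type*} [Group G] [Finite G]

theorem powerGraph_adj_iff {u v : G} :
    (powerGraph G).Adj u v ↔ u ≠ v ∧ (v ∈ zpowers u ∨ u ∈ zpowers v) := by
  have pos_pow {a b : G} : b ∈ zpowers a ↔ ∃ n : ℕ, 0 < n ∧ b = a ^ n := by
    rw [← (isOfFinOrder_of_finite a).mem_powers_iff_mem_zpowers]
    refine ⟨fun ⟨n, hn⟩ => ?_, fun ⟨n, _, hn⟩ => ⟨n, hn.symm⟩⟩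
    rcases Nat.eq_zero_or_pos n with rfl | hpos
    · exact ⟨orderOf a, orderOf_pos a, by rw [pow_orderOf_eq_one, ← hn]; exact pow_zero a⟩
    · exact ⟨n, hpos, hn.symm⟩
  simp only [powerGraph, pos_pow]

theorem powerGraph_adj_one {x : G} (hx : x ≠ 1) : (powerGraph G).Adj 1 x :=
  powerGraph_adj_iff.mpr ⟨hx.symm, Or.inr (one_mem _)⟩

theorem gDegree_powerGraph_one : gDegree (powerGraph G) 1 = Nat.card G - 1 := by
  have : (powerGraph G).neighborSet 1 = {1}ᶜ := by
    ext x
    exact ⟨fun h => (powerGraph G).ne_of_adj h |>.symm, powerGraph_adj_one⟩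
  rw [gDegree, this, Set.ncard_compl, Set.ncard_singleton]

theorem gDegree_powerGraph (x : G) :
    gDegree (powerGraph G) x =
      (orderOf x - 1) + {z : G | x ∈ zpowers z ∧ z ∉ zpowers x}.ncard := by
  have : (powerGraph G).neighborSet x =
      ((zpowers x : Set G) \ {x}) ∪ {z : G | x ∈ zpowers z ∧ z ∉ zpowers x} := by
    ext z
    simp only [SimpleGraph.mem_neighborSet, powerGraph_adj_iff, Set.mem_union, Set.mem_sdiff,
      SetLike.mem_coe, Set.mem_singleton_iff, Set.mem_ofPred_eq]
    by_cases hz : z ∈ zpowers x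
    · simp [hz, eq_comm]
    · have : z ≠ x := fun h => hz (h ▸ mem_zpowers x)
      simp [hz, this, Ne.symm this]
  rw [gDegree, this, Set.ncard_union_eq, Set.ncard_sdiff_singleton_of_mem (mem_zpowers x),
    ← Nat.card_coe_set_eq, SetLike.coe_sort_coe, Nat.card_zpowers]
  exact Set.disjoint_left.mpr fun z hz hz' => hz'.2 hz.1

theorem IsMaxCyclicGen.gDegree_powerGraph {y : G} (hy : IsMaxCyclicGen y) :
    gDegree (powerGraph G) y = orderOf y - 1 := by
  have : {z : G | y ∈ zpowers z ∧ z ∉ zpowers y} = ∅ :=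
    Set.eq_empty_of_forall_notMem fun z ⟨hyz, hzy⟩ =>
      hzy (hy z (zpowers_le.mpr hyz) ▸ mem_zpowers z)
  rw [_root_.gDegree_powerGraph, this, Set.ncard_empty, add_zero]

end PowerGraph

section UniformDegree

variable {G : Type*} [Group G] [Finite G] {d : ℕ}

theorem gDegree_powerGraph_eq_gMinDegree (h : MinimallyEdgeConnected (powerGraph G)) {x : G}
    (hx : x ≠ 1) : gDegree (powerGraph G) x = gMinDegree (powerGraph G) := by
  rcases h.gDegree_eq_gMinDegree_or (fun _ => powerGraph_adj_one) (powerGraph_adj_one hx)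
    with h1 | hx'
  · -- `1` has the largest possible degree, so all degrees are equal
    have := gDegree_le_card_sub_one (Γ := powerGraph G) x
    have := gMinDegree_le_gDegree (Γ := powerGraph G) x
    rw [gDegree_powerGraph_one] at h1
    omega
  · exact hx'

theorem IsMaxCyclicGen.orderOf_eq_of_forall_gDegree_eq
    (hdeg : ∀ x : G, x ≠ 1 → gDegree (powerGraph G) x = d) {y : G} (hy : IsMaxCyclicGen y)
    (hy1 : y ≠ 1) : orderOf y = d + 1 := by
  have := hy.gDegree_powerGraph
  have := orderOf_pos y
  rw [hdeg y hy1] at *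
  omega

theorem orderOf_dvd_of_forall_gDegree_eq
    (hdeg : ∀ x : G, x ≠ 1 → gDegree (powerGraph G) x = d) (x : G) : orderOf x ∣ d + 1 := by
  rcases eq_or_ne x 1 with rfl | hx
  · simp
  obtain ⟨y, hxy, hy⟩ := exists_isMaxCyclicGen_mem x
  have hy1 : y ≠ 1 := by rintro rfl; exact hx (by simpa using hxy)
  exact hy.orderOf_eq_of_forall_gDegree_eq hdeg hy1 ▸ orderOf_dvd_of_mem_zpowers hxy

/-- Take `y` of order `m = d + 1` and `w = y ^ p`. The degree of `w` counts the `m / p - 1`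
other elements of `⟨w⟩` and the elements `z` with `⟨w⟩ < ⟨z⟩`, which all have order `m`;
the latter form a union of sets of generators of cyclic subgroups of order `m`. -/
theorem totient_dvd_of_forall_gDegree_eq [Nontrivial G]
    (hdeg : ∀ x : G, x ≠ 1 → gDegree (powerGraph G) x = d) {p : ℕ} (hp : p.Prime)
    (hpm : p ∣ d + 1) (hlt : p < d + 1) : (d + 1).totient ∣ (d + 1) - (d + 1) / p := by
  set m := d + 1
  obtain ⟨x, hx⟩ := exists_ne (1 : G)
  obtain ⟨y, hxy, hy⟩ := exists_isMaxCyclicGen_mem x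
  have hym : orderOf y = m :=
    hy.orderOf_eq_of_forall_gDegree_eq hdeg (by rintro rfl; exact hx (by simpa using hxy))
  set w := y ^ p
  have hw : orderOf w = m / p := by rw [orderOf_pow_of_dvd hp.ne_zero (hym ▸ hpm), hym]
  have hmp : 1 < m / p := by
    obtain ⟨k, hk⟩ := hpm
    rw [hk, Nat.mul_div_cancel_left _ hp.pos]
    exact Nat.lt_of_mul_lt_mul_left (a := p) (by rw [mul_one, ← hk]; exact hlt)
  have hw1 : w ≠ 1 := fun h => by rw [h, orderOf_one] at hw; omega
  have hdegw := _root_.gDegree_powerGraph w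
  rw [hdeg w hw1, hw] at hdegw
  rw [show m - m / p = {z : G | w ∈ zpowers z ∧ z ∉ zpowers w}.ncard by omega]
  refine totient_dvd_ncard (fun z ⟨hwz, hzw⟩ z' hz' => ⟨hz' ▸ hwz, fun hz'w => ?_⟩)
    fun z ⟨hwz, hzw⟩ => ?_
  · exact hzw (zpowers_le.mpr hz'w (by rw [hz']; exact mem_zpowers z))
  · have hzm : orderOf z ∣ m / p * p := by
      rw [Nat.div_mul_cancel hpm]
      exact orderOf_dvd_of_forall_gDegree_eq hdeg z
    refine (Nat.eq_of_dvd_of_dvd_mul_prime hp (hw ▸ orderOf_dvd_of_mem_zpowers hwz) hzm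
      fun hz => hzw ?_).trans (Nat.div_mul_cancel hpm)
    rw [zpowers_eq_zpowers_of_le_of_orderOf_le (zpowers_le.mpr hwz) (by omega)]
    exact mem_zpowers z

theorem eq_minFac_of_forall_gDegree_eq [Nontrivial G]
    (hdeg : ∀ x : G, x ≠ 1 → gDegree (powerGraph G) x = d) {q : ℕ} (hq : q.Prime)
    (hqm : q ∣ d + 1) : q = (d + 1).minFac := by
  by_contra hne
  have hp : (d + 1).minFac.Prime :=
    Nat.minFac_prime fun h => hq.ne_one (Nat.dvd_one.mp (h ▸ hqm))
  have hlt : (d + 1).minFac < d + 1 := by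
    refine (Nat.minFac_le d.succ_pos).lt_of_ne fun h => hne ?_
    exact (Nat.prime_dvd_prime_iff_eq hq hp).mp (h ▸ hqm)
  exact Nat.not_totient_dvd_sub_div_minFac d.succ_ne_zero hq hqm hne
    (totient_dvd_of_forall_gDegree_eq hdeg hp (Nat.minFac_dvd _) hlt)

end UniformDegree

theorem stmt_4_general (G : Type*) [Group G] [Fintype G]
    (h : MinimallyEdgeConnected (powerGraph G)) :
    ∃ p k : ℕ, p.Prime ∧ Nat.card G = p ^ k := by
  have : Nontrivial G := h.1
  have hdeg x (hx : x ≠ 1) := gDegree_powerGraph_eq_gMinDegree h hx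
  -- by Cauchy, every prime divisor of `|G|` is an element order, so it divides `δ + 1`
  have key {r : ℕ} (hr : r.Prime) (hrG : r ∣ Nat.card G) :
      r = (gMinDegree (powerGraph G) + 1).minFac := by
    have := Fact.mk hr
    obtain ⟨x, hx⟩ := exists_prime_orderOf_dvd_card' r hrG
    exact eq_minFac_of_forall_gDegree_eq hdeg hr (hx ▸ orderOf_dvd_of_forall_gDegree_eq hdeg x)
  have hp : (Nat.card G).minFac.Prime := Nat.minFac_prime Finite.one_lt_card.ne'
  refine ⟨_, _, hp, Nat.eq_prime_pow_of_unique_prime_dvd Nat.card_pos.ne' fun hq hqG => ?_⟩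
  rw [key hq hqG, key hp (Nat.minFac_dvd _)]

/-- A finite group with no maximal subgroup of order two whose power graph is
minimally edge-connected has prime power order. -/
theorem stmt_4 (G : Type*) [Group G] [Fintype G]
    (hmax : ¬ ∃ H : Subgroup G, Nat.card H = 2 ∧ IsCoatom H)
    (h : MinimallyEdgeConnected (powerGraph G)) :
    ∃ p k : ℕ, p.Prime ∧ Nat.card G = p ^ k :=
  stmt_4_general G h
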